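/- arXiv:2304.07172 — 2 statements merged into one kernel-verified Lean document; each statement's English description precedes it below -/
import Mathlib

section
/- Suppose N experiments each have quantum Fisher information at most min(c, (t_x·h)²) for evolution times t_x ≥ 0 (with constants c, h > 0), and the total Fisher information is their sum. Then subject to Σ_x t_x = T, the total Fisher information is at most h√c·T + c. Consequently, if ε² ≥ 1/(total Fisher information), then T ≥ (ε⁻² − c)/(h√c). -/
/-- If `N` experiments have Fisher information at most `min(c, (t_x h)²)` with evolution times
`t_x ≥ 0` summing to `T`, then the total Fisher information is at most `h√c·T + c`; consequently
(by Cramér–Rao) `ε² ≥ 1/(total FI)` forces `T ≥ (ε⁻² - c)/(h√c)`. -/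
theorem total_fisher_information_bound
    (N : ℕ) (t : Fin N → ℝ) (ht : ∀ x, 0 ≤ t x)
    (c h : ℝ) (hc : 0 < c) (hh : 0 < h)
    (T : ℝ) (hT : T = ∑ x, t x) :
    (∑ x, min c ((t x * h) ^ 2)) ≤ h * Real.sqrt c * T + c ∧
      ∀ ε : ℝ, 0 < ε → 0 < (∑ x, min c ((t x * h) ^ 2)) →
        ε ^ 2 ≥ (∑ x, min c ((t x * h) ^ 2))⁻¹ →
        T ≥ ((ε : ℝ) ⁻¹ ^ 2 - c) / (h * Real.sqrt c) := by
  have hsc : 0 < Real.sqrt c := Real.sqrt_pos.mpr hc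
  have key : ∀ x, min c ((t x * h) ^ 2) ≤ h * Real.sqrt c * t x := by
    intro x
    rcases le_or_gt (t x * h) (Real.sqrt c) with hle | hgt
    · calc min c ((t x * h) ^ 2) ≤ (t x * h) ^ 2 := min_le_right _ _
        _ = (t x * h) * (t x * h) := sq (t x * h) ▸ (sq (t x * h)).symm ▸ by ring
        _ ≤ (t x * h) * Real.sqrt c := by
            apply mul_le_mul_of_nonneg_left hle (mul_nonneg (ht x) hh.le)
        _ = h * Real.sqrt c * t x := by ring
    · calc min c ((t x * h) ^ 2) ≤ c := min_le_left _ _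
        _ = Real.sqrt c * Real.sqrt c := (Real.mul_self_sqrt hc.le).symm
        _ ≤ (t x * h) * Real.sqrt c := by
            apply mul_le_mul_of_nonneg_right hgt.le hsc.le
        _ = h * Real.sqrt c * t x := by ring
  have main : (∑ x, min c ((t x * h) ^ 2)) ≤ h * Real.sqrt c * T + c := by
    calc (∑ x, min c ((t x * h) ^ 2)) ≤ ∑ x, h * Real.sqrt c * t x :=
          Finset.sum_le_sum fun x _ => key x
      _ = h * Real.sqrt c * T := by rw [hT, Finset.mul_sum]
      _ ≤ h * Real.sqrt c * T + c := le_add_of_nonneg_right hc.le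
  refine ⟨main, fun ε hε hS hcr => ?_⟩
  have hSge : (ε : ℝ)⁻¹ ^ 2 ≤ ∑ x, min c ((t x * h) ^ 2) := by
    rw [inv_pow]
    exact inv_le_of_inv_le₀ hS hcr
  have : (ε : ℝ)⁻¹ ^ 2 - c ≤ h * Real.sqrt c * T := by
    linarith [hSge.trans main]
  rw [ge_iff_le, div_le_iff₀ (mul_pos hh hsc)]
  linarith
end

section
/- The ordered Bell numbers (Fubini numbers) satisfy Σ_{k=1}^{n} S(n,k)·k! ≤ b · n! / (log 2)^n for all n ≥ 1, where b = 1/(2 log 2) + (log 2)/24 and S(n,k) are Stirling numbers of the second kind. -/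
/-!
Let `a n = ∑ₖ S(n,k) k!` and `x n = n! / (log 2)^n`. The numbers `a n` satisfy the binomial
recurrence `a (n+1) = ∑_{j ≤ n} C(n+1,j) a j`, while
`∑_{j ≤ n} C(n+1,j) x j ≤ (exp (log 2) - 1) x (n+1) = x (n+1)`. Hence the defect
`d n = b x n - a n` satisfies `d (n+1) ≥ ∑_{j ≤ n} C(n+1,j) d j`. Only `d 0 = b - 1 ≥ -5/16`
is negative, and it is outweighed by the `2^(n+1) - 2` terms with `j ≥ 1` once `d 1, d 2 ≥ 1/16`,
which is a numerical check; so `d n ≥ 1/16` for all `n ≥ 1`.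
-/

/-- Stirling numbers of the second kind, via the recurrence
`S(n+1, k+1) = (k+1)·S(n, k+1) + S(n, k)`. -/
def stirlingSecond : ℕ → ℕ → ℕ
  | 0, 0 => 1
  | 0, _ + 1 => 0
  | _ + 1, 0 => 0
  | n + 1, k + 1 => (k + 1) * stirlingSecond n (k + 1) + stirlingSecond n k

open Finset Real
open scoped Nat

theorem stirlingSecond_eq_nat_stirlingSecond :
    ∀ n k, stirlingSecond n k = Nat.stirlingSecond n k
  | 0, 0 | 0, _ + 1 | _ + 1, 0 => rfl
  | n + 1, k + 1 => by
    rw [stirlingSecond, Nat.stirlingSecond_succ_succ, stirlingSecond_eq_nat_stirlingSecond n,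
      stirlingSecond_eq_nat_stirlingSecond n]

namespace Nat

theorem stirlingSecond_succ_succ_eq_sum_choose (n k : ℕ) :
    stirlingSecond (n + 1) (k + 1) = ∑ i ∈ range (n + 1), n.choose i * stirlingSecond i k := by
  induction n generalizing k with
  | zero => cases k <;> rfl
  | succ n ih =>
    have hsplit := sum_choose_succ_mul (R := ℕ) (fun i _ => stirlingSecond i k) n
    simp only [Nat.cast_id] at hsplit
    rw [hsplit, ← ih, stirlingSecond_succ_succ]
    cases k with
    | zero => simp [stirlingSecond_one_right]
    | succ k =>
      simp only [stirlingSecond_succ_succ, mul_add, sum_add_distrib, mul_left_comm _ (k + 1),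
        ← mul_sum, ← ih]
      ring

def orderedBell (n : ℕ) : ℕ := ∑ k ∈ range (n + 1), stirlingSecond n k * k !

@[simp] theorem orderedBell_zero : orderedBell 0 = 1 := rfl
@[simp] theorem orderedBell_one : orderedBell 1 = 1 := rfl
@[simp] theorem orderedBell_two : orderedBell 2 = 3 := rfl

theorem orderedBell_eq_sum_range_of_lt {n N : ℕ} (h : n < N) :
    orderedBell n = ∑ k ∈ range N, stirlingSecond n k * k ! :=
  sum_subset (range_subset_range.2 h) fun k _ hk => by
    rw [stirlingSecond_eq_zero_of_lt (by simpa using hk), zero_mul]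

theorem orderedBell_eq_sum_Icc {n : ℕ} (hn : n ≠ 0) :
    orderedBell n = ∑ k ∈ Icc 1 n, stirlingSecond n k * k ! := by
  obtain ⟨n, rfl⟩ := exists_eq_succ_of_ne_zero hn
  rw [orderedBell, range_succ_eq_Icc_zero, Icc_eq_cons_Ioc (Nat.zero_le _), sum_cons,
    ← Icc_add_one_left_eq_Ioc, stirlingSecond_succ_zero, zero_mul, zero_add, zero_add]

theorem sum_stirlingSecond_succ_succ_mul_factorial (n : ℕ) :
    ∑ k ∈ range (n + 2), stirlingSecond (n + 2) (k + 1) * k ! = 2 * orderedBell (n + 1) := by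
  have hterm (k : ℕ) : stirlingSecond (n + 2) (k + 1) * k ! =
      stirlingSecond (n + 1) (k + 1) * (k + 1)! + stirlingSecond (n + 1) k * k ! := by
    rw [stirlingSecond_succ_succ, factorial_succ]; ring
  have hshift := sum_range_succ' (fun k => stirlingSecond (n + 1) k * k !) (n + 2)
  rw [← orderedBell_eq_sum_range_of_lt (by omega), stirlingSecond_succ_zero, zero_mul,
    add_zero] at hshift
  simp only [hterm, sum_add_distrib, ← hshift, two_mul]
  rfl

theorem orderedBell_succ (n : ℕ) :
    orderedBell (n + 1) = ∑ j ∈ range (n + 1), (n + 1).choose j * orderedBell j := by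
  have hswap : ∑ k ∈ range (n + 2), stirlingSecond (n + 2) (k + 1) * k ! =
      ∑ j ∈ range (n + 2), (n + 1).choose j * orderedBell j := by
    simp_rw [stirlingSecond_succ_succ_eq_sum_choose, sum_mul]
    rw [sum_comm]
    refine sum_congr rfl fun j hj => ?_
    rw [orderedBell_eq_sum_range_of_lt (mem_range.1 hj), mul_sum]
    simp only [mul_assoc]
  rw [sum_stirlingSecond_succ_succ_mul_factorial, sum_range_succ, choose_self, one_mul] at hswap
  omega

end Nat

theorem sum_choose_mul_factorial_div_pow_le {x : ℝ} (hx : 0 < x) (m : ℕ) :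
    ∑ j ∈ range m, (m.choose j : ℝ) * (j ! / x ^ j) ≤ (m ! / x ^ m) * (exp x - 1) := by
  have hterm : ∀ j ∈ range m,
      (m.choose j : ℝ) * (j ! / x ^ j) =
        m ! / x ^ m * (x ^ (m - 1 - j + 1) / (m - 1 - j + 1)!) := by
    intro j hj
    have hjm : m - 1 - j + 1 = m - j := by have := mem_range.1 hj; omega
    have hfac : (m.choose j : ℝ) * j ! * (m - j)! = m ! := by
      exact_mod_cast Nat.choose_mul_factorial_mul_factorial (mem_range.1 hj).le
    rw [hjm, ← hfac, ← pow_sub_mul_pow x (mem_range.1 hj).le]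
    field_simp
  rw [sum_congr rfl hterm, ← mul_sum, sum_range_reflect (fun i => x ^ (i + 1) / (i + 1)!) m]
  gcongr
  have := sum_le_exp_of_nonneg hx.le (m + 1)
  rw [sum_range_succ'] at this
  norm_num at this
  linarith

theorem le_of_sum_choose_mul_le {d : ℕ → ℝ} {δ : ℝ} (hδ : 0 ≤ δ)
    (hd : ∀ n, ∑ j ∈ range (n + 1), ((n + 1).choose j : ℝ) * d j ≤ d (n + 1))
    (h₀ : -(5 * δ) ≤ d 0) (h₁ : δ ≤ d 1) (h₂ : δ ≤ d 2) {n : ℕ} (hn : n ≠ 0) :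
    δ ≤ d n := by
  induction n using Nat.strong_induction_on with
  | _ n ih =>
  match n, hn with
  | 1, _ => exact h₁
  | 2, _ => exact h₂
  | m + 3, _ =>
    have hchoose : ∑ j ∈ range (m + 2), ((m + 3).choose (j + 1) : ℝ) = 2 ^ (m + 3) - 2 := by
      have := Nat.sum_range_choose (m + 3)
      rw [sum_range_succ', sum_range_succ, Nat.choose_self, Nat.choose_zero_right] at this
      rw [eq_sub_iff_add_eq]
      exact_mod_cast this
    have hpow : (8 : ℝ) ≤ 2 ^ (m + 3) := by
      calc (8 : ℝ) = 2 ^ 3 := by norm_num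
        _ ≤ 2 ^ (m + 3) := pow_le_pow_right₀ one_le_two (by omega)
    calc δ ≤ -(5 * δ) + ∑ j ∈ range (m + 2), ((m + 3).choose (j + 1) : ℝ) * δ := by
          rw [← sum_mul, hchoose]; nlinarith
      _ ≤ d 0 + ∑ j ∈ range (m + 2), ((m + 3).choose (j + 1) : ℝ) * d (j + 1) := by
          gcongr with j hj
          exact ih (j + 1) (by simp at hj; omega) (by omega)
      _ = ∑ j ∈ range (m + 3), ((m + 3).choose j : ℝ) * d j := by
          rw [sum_range_succ' _ (m + 2)]; simp [add_comm]
      _ ≤ d (m + 3) := hd (m + 2)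

theorem sum_choose_mul_sub_orderedBell_le {b : ℝ} (hb : 0 ≤ b) (n : ℕ) :
    ∑ j ∈ range (n + 1),
        ((n + 1).choose j : ℝ) * (b * (j ! / log 2 ^ j) - Nat.orderedBell j) ≤
      b * ((n + 1)! / log 2 ^ (n + 1)) - Nat.orderedBell (n + 1) := by
  have hexp := sum_choose_mul_factorial_div_pow_le (log_pos one_lt_two) (n + 1)
  rw [exp_log two_pos] at hexp
  simp only [mul_sub, sum_sub_distrib, mul_left_comm _ b, ← mul_sum, Nat.orderedBell_succ]
  push_cast
  gcongr
  linarith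

theorem orderedBell_constant_bounds :
    let b := 1 / (2 * log 2) + log 2 / 24
    11 / 16 ≤ b ∧ 17 / 16 ≤ b / log 2 ∧ 49 / 16 ≤ b * (2 / log 2 ^ 2) := by
  intro b
  have hlo := log_two_gt_d9
  have hhi := log_two_lt_d9
  have hpos : 0 < log 2 := log_pos one_lt_two
  refine ⟨?_, ?_, ?_⟩ <;>
  · simp only [b]
    field_simp
    nlinarith

/-- The ordered Bell (Fubini) numbers satisfy
`Σ_{k=1}^{n} S(n,k)·k! ≤ b·n!/(log 2)^n` for `n ≥ 1`, with `b = 1/(2 log 2) + (log 2)/24`. -/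
theorem ordered_bell_le (n : ℕ) (hn : 1 ≤ n) :
    ∑ k ∈ Finset.Icc 1 n, ((stirlingSecond n k : ℝ) * (Nat.factorial k : ℝ)) ≤
      (1 / (2 * Real.log 2) + Real.log 2 / 24) *
        (Nat.factorial n : ℝ) / (Real.log 2) ^ n := by
  obtain ⟨h₀, h₁, h₂⟩ := orderedBell_constant_bounds
  set b := 1 / (2 * log 2) + log 2 / 24
  have hdefect : 1 / 16 ≤ b * (n ! / log 2 ^ n) - Nat.orderedBell n :=
    le_of_sum_choose_mul_le (d := fun j => b * (j ! / log 2 ^ j) - Nat.orderedBell j)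
      (by norm_num) (sum_choose_mul_sub_orderedBell_le (by positivity))
      (by norm_num; linarith) (by norm_num; rw [← div_eq_mul_inv]; linarith)
      (by norm_num; linarith) (by omega)
  have hsum : ∑ k ∈ Icc 1 n, ((stirlingSecond n k : ℝ) * k !) = Nat.orderedBell n := by
    rw [Nat.orderedBell_eq_sum_Icc (by omega)]
    push_cast
    simp only [stirlingSecond_eq_nat_stirlingSecond]
  rw [hsum, mul_div_assoc]
  linarith
end
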